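/- Pullback through an element-wise unary function node (Theorem 6): let f : ℝ → ℝ be a differentiable function with derivative f′, applied element-wise to tensors with index set s1, and let Y be a function from tensors with index set s1 to tensors with index set s2 that has derivative tensor f̄ (index set s2s1) at the point f(A), where A is a tensor with index set s1 and f(A) denotes the element-wise application of f to A. Then the composition A ↦ Y(f(A)) has derivative tensor f̄ *_{(s2s1, s1, s2s1)} f′(A) at A, where f′(A) denotes f′ applied element-wise to the entries of A. -/

import Mathlib

open Filter

/-- A function `A` on full index assignments is a *tensor with index set `s`* if it only
depends on the values of the indices in `s`. -/
def TensorDependsOn {ι : Type*} (d : ι → ℕ) (s : Finset ι) (A : (∀ i, Fin (d i)) → ℝ) : Prop :=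
  ∀ a b : ∀ i, Fin (d i), (∀ i ∈ s, a i = b i) → A a = A b

/-- Generic tensor multiplication `A *_{(s1,s2,s3)} B`: the entry of the result at an
assignment `a` is the sum over all assignments of the indices in `(s1 ∪ s2) \ s3` of the
product of the corresponding entries of `A` and `B`. -/
noncomputable def tmul {ι : Type*} [Fintype ι] [DecidableEq ι] (d : ι → ℕ)
    (s1 s2 s3 : Finset ι) (A B : (∀ i, Fin (d i)) → ℝ) : (∀ i, Fin (d i)) → ℝ :=
  fun a => ∑ b : ∀ i, Fin (d i),
    if (∀ i, i ∉ (s1 ∪ s2) \ s3 → b i = a i) then A b * B b else 0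

/-- The Euclidean/Frobenius norm `√(∑_s A[s]²)` of a tensor with index set `s`:
the sum ranges over the assignments of the indices in `s` (indices outside `s` are
pinned to the value `0`). -/
noncomputable def tnorm {ι : Type*} [Fintype ι] [DecidableEq ι] (d : ι → ℕ)
    [∀ i, NeZero (d i)] (s : Finset ι) (A : (∀ i, Fin (d i)) → ℝ) : ℝ :=
  Real.sqrt (∑ a : ∀ i, Fin (d i), if (∀ i, i ∉ s → a i = 0) then A a ^ 2 else 0)

/-- Fréchet derivative (Definition 1): a function `f` from tensors with index set `sx` to
tensors with index set `sy` has derivative tensor `D` (with index set `sy ∪ sx`) at `x` if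
`‖f(x+h) − f(x) − D ∘ h‖ / ‖h‖ → 0` as the tensor `h` (with index set `sx`) tends to `0`,
where `D ∘ h = D *_{(sy sx, sx, sy)} h`. -/
noncomputable def HasDerivTensor {ι : Type*} [Fintype ι] [DecidableEq ι] (d : ι → ℕ)
    [∀ i, NeZero (d i)] (sx sy : Finset ι)
    (f : ((∀ i, Fin (d i)) → ℝ) → ((∀ i, Fin (d i)) → ℝ))
    (x D : (∀ i, Fin (d i)) → ℝ) : Prop :=
  Tendsto
    (fun h => tnorm d sy (f (x + h) - f x - tmul d (sy ∪ sx) sx sy D h) / tnorm d sx h)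
    (nhdsWithin 0 {h | TensorDependsOn d sx h ∧ h ≠ 0}) (nhds 0)

section Aux
variable {ι : Type*} [Fintype ι] [DecidableEq ι] (d : ι → ℕ) [∀ i, NeZero (d i)]

noncomputable def pbEmb (s : Finset ι) (A : (∀ i, Fin (d i)) → ℝ) :
    EuclideanSpace ℝ (∀ i, Fin (d i)) :=
  WithLp.toLp 2 (fun a => if (∀ i, i ∉ s → a i = 0) then A a else 0)

lemma pb_tnorm_eq (s : Finset ι) (A : (∀ i, Fin (d i)) → ℝ) :
    tnorm d s A = ‖pbEmb d s A‖ := by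
  rw [EuclideanSpace.norm_eq, tnorm]
  congr 1
  refine Finset.sum_congr rfl fun a _ => ?_
  simp [pbEmb, apply_ite (fun x : ℝ => ‖x‖ ^ 2), Real.norm_eq_abs, sq_abs]

lemma pb_tnorm_triangle (s : Finset ι) (A B : (∀ i, Fin (d i)) → ℝ) :
    tnorm d s (A + B) ≤ tnorm d s A + tnorm d s B := by
  rw [pb_tnorm_eq, pb_tnorm_eq, pb_tnorm_eq]
  have h : pbEmb d s (A + B) = pbEmb d s A + pbEmb d s B := by
    ext a
    simp only [pbEmb, Pi.add_apply, PiLp.add_apply, PiLp.toLp_apply]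
    split <;> simp
  rw [h]; exact norm_add_le _ _

lemma pb_tnorm_nonneg (s : Finset ι) (A : (∀ i, Fin (d i)) → ℝ) : 0 ≤ tnorm d s A :=
  Real.sqrt_nonneg _

lemma pb_tnorm_zero (s : Finset ι) : tnorm d s (0 : (∀ i, Fin (d i)) → ℝ) = 0 := by
  simp [tnorm]

lemma pb_abs_le_tnorm (s : Finset ι) (A : (∀ i, Fin (d i)) → ℝ) (a : ∀ i, Fin (d i))
    (ha : ∀ i, i ∉ s → a i = 0) : |A a| ≤ tnorm d s A := by
  rw [tnorm, ← Real.sqrt_sq_eq_abs]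
  apply Real.sqrt_le_sqrt
  have h := Finset.single_le_sum
    (f := fun b => if (∀ i, i ∉ s → b i = 0) then A b ^ 2 else 0)
    (fun b _ => by positivity) (Finset.mem_univ a)
  simpa [if_pos ha] using h

lemma pb_entry_le_tnorm (s : Finset ι) (A : (∀ i, Fin (d i)) → ℝ)
    (hA : TensorDependsOn d s A) (b : ∀ i, Fin (d i)) : |A b| ≤ tnorm d s A := by
  have hb : A b = A (fun i => if i ∈ s then b i else 0) :=
    hA _ _ (fun i hi => (if_pos hi).symm)
  rw [hb]
  exact pb_abs_le_tnorm d s A _ (fun i hi => if_neg hi)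

lemma pb_tnorm_le (s : Finset ι) (A : (∀ i, Fin (d i)) → ℝ) (M : ℝ) (hM : 0 ≤ M)
    (h : ∀ a, |A a| ≤ M) :
    tnorm d s A ≤ Real.sqrt (Fintype.card (∀ i, Fin (d i))) * M := by
  rw [tnorm, ← Real.sqrt_sq hM, ← Real.sqrt_mul (by positivity)]
  apply Real.sqrt_le_sqrt
  calc ∑ a : ∀ i, Fin (d i), (if (∀ i, i ∉ s → a i = 0) then A a ^ 2 else 0)
      ≤ ∑ _a : ∀ i, Fin (d i), M ^ 2 := by
        refine Finset.sum_le_sum fun a _ => ?_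
        split
        · calc A a ^ 2 = |A a| ^ 2 := (sq_abs _).symm
            _ ≤ M ^ 2 := by gcongr; exact h a
        · positivity
    _ = (Fintype.card (∀ i, Fin (d i)) : ℝ) * M ^ 2 := by
        simp [Finset.sum_const, Finset.card_univ, nsmul_eq_mul]

lemma pb_tnorm_pos (s : Finset ι) (A : (∀ i, Fin (d i)) → ℝ)
    (hA : TensorDependsOn d s A) (h0 : A ≠ 0) : 0 < tnorm d s A := by
  obtain ⟨a0, ha0⟩ : ∃ a, A a ≠ 0 := by
    by_contra hc; push_neg at hc; exact h0 (funext hc)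
  have h1 : (0:ℝ) < |A a0| := abs_pos.mpr ha0
  linarith [pb_entry_le_tnorm d s A hA a0]

omit [∀ (i : ι), NeZero (d i)] in
lemma pb_tmul_same (s sx : Finset ι) (hx : sx ⊆ s) (A B : (∀ i, Fin (d i)) → ℝ)
    (a : ∀ i, Fin (d i)) : tmul d s sx s A B a = A a * B a := by
  have h1 : (s ∪ sx) \ s = ∅ := by
    rw [Finset.union_eq_left.mpr hx, Finset.sdiff_self]
  have h2 : ∀ b : ∀ i, Fin (d i), (∀ i, i ∉ (s ∪ sx) \ s → b i = a i) ↔ b = a := by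
    intro b; rw [h1]; simp [funext_iff]
  simp only [tmul]
  rw [Finset.sum_congr rfl (fun b _ => if_congr (h2 b) rfl rfl)]
  simp

lemma pb_unif (f f' : ℝ → ℝ) (hf : ∀ t, HasDerivAt f (f' t) t) (x : ℝ) {ε : ℝ}
    (hε : 0 < ε) :
    ∃ δ > 0, ∀ t : ℝ, |t| < δ → |f (x + t) - f x - f' x * t| ≤ ε * |t| := by
  have h := hasFDerivAt_iff_isLittleO_nhds_zero.mp (hf x).hasFDerivAt
  have h2 := h.def hε
  rw [Metric.eventually_nhds_iff] at h2
  obtain ⟨δ, hδ, H⟩ := h2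
  refine ⟨δ, hδ, fun t ht => ?_⟩
  have h3 := H (y := t) (by simpa [dist_zero_right, Real.norm_eq_abs] using ht)
  simpa [Real.norm_eq_abs, ContinuousLinearMap.smulRight_apply,
    ContinuousLinearMap.one_apply, smul_eq_mul, mul_comm] using h3

end Aux

/-- Pullback through an element-wise unary function node (Theorem 6): let `f : ℝ → ℝ` be
differentiable with derivative `f′`, applied element-wise to tensors with index set `s1`,
and let `Y` map tensors with index set `s1` to tensors with index set `s2`, with derivative
tensor `fbar` at the point `f(A)` (element-wise application), where `A` is a tensor with
index set `s1`. Then `A ↦ Y(f(A))` has derivative tensor `fbar *_(s2s1, s1, s2s1) f′(A)`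
at `A`, where `f′(A)` is `f′` applied element-wise to the entries of `A`. -/
theorem pullback_elementwise {ι : Type*} [Fintype ι] [DecidableEq ι] (d : ι → ℕ)
    [∀ i, NeZero (d i)] (s1 s2 : Finset ι) (h12 : s1 ∩ s2 = ∅)
    (f f' : ℝ → ℝ) (hf : ∀ t, HasDerivAt f (f' t) t)
    (Y : ((∀ i, Fin (d i)) → ℝ) → ((∀ i, Fin (d i)) → ℝ))
    (A fbar : (∀ i, Fin (d i)) → ℝ)
    (hA : TensorDependsOn d s1 A) (hY : ∀ z, TensorDependsOn d s2 (Y z))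
    (hfbar : TensorDependsOn d (s2 ∪ s1) fbar)
    (hdY : HasDerivTensor d s1 s2 Y (fun a => f (A a)) fbar) :
    HasDerivTensor d s1 s2 (fun A' => Y (fun a => f (A' a))) A
      (tmul d (s2 ∪ s1) s1 (s2 ∪ s1) fbar (fun a => f' (A a))) := by
  haveI hNE : Nonempty (∀ i, Fin (d i)) :=
    ⟨fun i => ⟨0, Nat.pos_of_ne_zero (NeZero.ne (d i))⟩⟩
  -- basic set facts
  have hdisj : ∀ i, i ∈ s1 → i ∉ s2 := fun i hi1 hi2 => by
    have : i ∈ s1 ∩ s2 := Finset.mem_inter.mpr ⟨hi1, hi2⟩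
    simp [h12] at this
  have hset : (s2 ∪ s1 ∪ s1) \ s2 = s1 := by
    ext i
    simp only [Finset.mem_sdiff, Finset.mem_union]
    constructor
    · rintro ⟨(h | h) | h, h2⟩ <;> tauto
    · intro h; exact ⟨Or.inl (Or.inr h), hdisj i h⟩
  -- pointwise form of the contraction against s2
  have hL : ∀ (C g : (∀ i, Fin (d i)) → ℝ) (a : ∀ i, Fin (d i)),
      tmul d (s2 ∪ s1) s1 s2 C g a
        = ∑ b : ∀ i, Fin (d i), if (∀ i, i ∉ s1 → b i = a i) then C b * g b else 0 := by
    intro C g a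
    simp only [tmul, hset]
  -- the claimed derivative tensor, pointwise
  set ZD := tmul d (s2 ∪ s1) s1 (s2 ∪ s1) fbar (fun a => f' (A a)) with hZDdef
  have hZD : ∀ b, ZD b = fbar b * f' (A b) := fun b =>
    pb_tmul_same d (s2 ∪ s1) s1 Finset.subset_union_right fbar _ b
  clear_value ZD
  -- uniform differentiability over the (finitely many) base values
  have hunif : ∀ ε > (0:ℝ), ∃ δ > (0:ℝ), ∀ (b : ∀ i, Fin (d i)) (t : ℝ), |t| < δ →
      |f (A b + t) - f (A b) - f' (A b) * t| ≤ ε * |t| := by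
    intro ε hε
    choose δf hδf H using fun b : (∀ i, Fin (d i)) => pb_unif f f' hf (A b) hε
    refine ⟨Finset.univ.inf' Finset.univ_nonempty δf, ?_, fun b t ht =>
      H b t (lt_of_lt_of_le ht (Finset.inf'_le _ (Finset.mem_univ b)))⟩
    exact (Finset.lt_inf'_iff _).mpr fun b _ => hδf b
  -- constants
  set c := Real.sqrt (Fintype.card (∀ i, Fin (d i))) with hcdef
  have hc : 0 ≤ c := Real.sqrt_nonneg _
  clear_value c
  set S := ∑ b : ∀ i, Fin (d i), |fbar b| with hSdef
  have hS : 0 ≤ S := Finset.sum_nonneg fun b _ => abs_nonneg _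
  clear_value S
  set Mf' := Finset.univ.sup' Finset.univ_nonempty (fun b : (∀ i, Fin (d i)) => |f' (A b)|)
    with hMfdef
  have hMf : ∀ b, |f' (A b)| ≤ Mf' := fun b => by
    rw [hMfdef]
    exact Finset.le_sup' (fun b : (∀ i, Fin (d i)) => |f' (A b)|) (Finset.mem_univ b)
  have hMf0 : 0 ≤ Mf' := le_trans (abs_nonneg _) (hMf (Classical.arbitrary _))
  set C1 := Mf' + 1 with hC1def
  have hC1 : (0:ℝ) < C1 := by rw [hC1def]; linarith
  clear_value Mf' C1
  -- Lipschitz-type bound from ε = 1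
  obtain ⟨δL, hδL, HL⟩ := hunif 1 one_pos
  -- main tendsto statement
  rw [HasDerivTensor, Metric.tendsto_nhdsWithin_nhds] at hdY ⊢
  intro ε hε
  have hden1 : (0:ℝ) < c * S + 1 := by positivity
  have hden2 : (0:ℝ) < c * C1 + 1 := by positivity
  set ε1 := ε / (2 * (c * S + 1)) with hε1def
  have hε1 : 0 < ε1 := by rw [hε1def]; positivity
  clear_value ε1
  set ε2 := ε / (2 * (c * C1 + 1)) with hε2def
  have hε2 : 0 < ε2 := by rw [hε2def]; positivity
  clear_value ε2
  obtain ⟨δ1, hδ1, H1⟩ := hunif ε1 hε1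
  obtain ⟨δ2, hδ2, H2⟩ := hdY ε2 hε2
  refine ⟨min δL (min δ1 (δ2 / C1)), by positivity, ?_⟩
  intro h hmem hdist
  obtain ⟨hdep, hne⟩ := hmem
  have hnorm : ‖h‖ < min δL (min δ1 (δ2 / C1)) := by rwa [dist_zero_right] at hdist
  have hhb : ∀ b, |h b| < min δL (min δ1 (δ2 / C1)) := fun b =>
    lt_of_le_of_lt (by simpa [Real.norm_eq_abs] using norm_le_pi_norm h b) hnorm
  have hhbL : ∀ b, |h b| < δL := fun b => lt_of_lt_of_le (hhb b) (min_le_left _ _)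
  have hhb1 : ∀ b, |h b| < δ1 := fun b =>
    lt_of_lt_of_le (hhb b) (le_trans (min_le_right _ _) (min_le_left _ _))
  have hhb2 : ∀ b, |h b| < δ2 / C1 := fun b =>
    lt_of_lt_of_le (hhb b) (le_trans (min_le_right _ _) (min_le_right _ _))
  set T := tnorm d s1 h with hTdef
  have hT : 0 < T := pb_tnorm_pos d s1 h hdep hne
  have hhT : ∀ b, |h b| ≤ T := fun b => pb_entry_le_tnorm d s1 h hdep b
  clear_value T
  -- the increment k
  set k : (∀ i, Fin (d i)) → ℝ := fun b => f (A b + h b) - f (A b) with hkdef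
  have hfc : (fun a => f ((A + h) a)) = (fun a => f (A a)) + k := by
    funext a
    simp only [Pi.add_apply, hkdef]
    ring
  have hkdep : TensorDependsOn d s1 k := by
    intro a b hab
    simp only [hkdef]
    rw [hA a b hab, hdep a b hab]
  have hkb : ∀ b, |k b| ≤ C1 * |h b| := by
    intro b
    have h4 : |k b - f' (A b) * h b| ≤ 1 * |h b| := by
      simpa [hkdef] using HL b (h b) (hhbL b)
    calc |k b| = |(k b - f' (A b) * h b) + f' (A b) * h b| := by ring_nf
      _ ≤ |k b - f' (A b) * h b| + |f' (A b) * h b| := abs_add_le _ _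
      _ ≤ 1 * |h b| + Mf' * |h b| :=
          add_le_add h4 (by rw [abs_mul]; exact mul_le_mul_of_nonneg_right (hMf b) (abs_nonneg _))
      _ = C1 * |h b| := by rw [hC1def]; ring
  have hkT : ∀ b, |k b| ≤ C1 * T := fun b =>
    (hkb b).trans (mul_le_mul_of_nonneg_left (hhT b) hC1.le)
  have hknorm : dist k 0 < δ2 := by
    rw [dist_zero_right]
    refine (pi_norm_lt_iff hδ2).mpr fun b => ?_
    rw [Real.norm_eq_abs]
    calc |k b| ≤ C1 * |h b| := hkb b
      _ < C1 * (δ2 / C1) := mul_lt_mul_of_pos_left (hhb2 b) hC1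
      _ = δ2 := by field_simp
  -- Term 1: via the derivative of Y
  have hterm1 : tnorm d s2 (Y ((fun a => f (A a)) + k) - Y (fun a => f (A a))
      - tmul d (s2 ∪ s1) s1 s2 fbar k) ≤ ε2 * (c * (C1 * T)) := by
    by_cases hk0 : k = 0
    · have hzero : Y ((fun a => f (A a)) + k) - Y (fun a => f (A a))
          - tmul d (s2 ∪ s1) s1 s2 fbar k = 0 := by
        rw [hk0]
        funext a
        simp [tmul]
      rw [hzero, pb_tnorm_zero]
      positivity
    · have hq := H2 ⟨hkdep, hk0⟩ hknorm
      rw [dist_zero_right, Real.norm_eq_abs] at hq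
      have hKpos : 0 < tnorm d s1 k := pb_tnorm_pos d s1 k hkdep hk0
      have h5 : tnorm d s2 (Y ((fun a => f (A a)) + k) - Y (fun a => f (A a))
          - tmul d (s2 ∪ s1) s1 s2 fbar k) / tnorm d s1 k ≤ ε2 :=
        le_of_lt (lt_of_le_of_lt (le_abs_self _) hq)
      have h6 : tnorm d s1 k ≤ c * (C1 * T) := by
        have := pb_tnorm_le d s1 k (C1 * T) (by positivity) hkT
        rwa [← hcdef] at this
      calc tnorm d s2 (Y ((fun a => f (A a)) + k) - Y (fun a => f (A a))
            - tmul d (s2 ∪ s1) s1 s2 fbar k)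
          = (tnorm d s2 (Y ((fun a => f (A a)) + k) - Y (fun a => f (A a))
            - tmul d (s2 ∪ s1) s1 s2 fbar k) / tnorm d s1 k) * tnorm d s1 k := by
            field_simp
        _ ≤ ε2 * (c * (C1 * T)) := mul_le_mul h5 h6 hKpos.le hε2.le
  -- Term 2: comparison of the linear parts
  have hdiffb : ∀ a, |(tmul d (s2 ∪ s1) s1 s2 fbar k - tmul d (s2 ∪ s1) s1 s2 ZD h) a|
      ≤ S * (ε1 * T) := by
    intro a
    rw [Pi.sub_apply, hL, hL, ← Finset.sum_sub_distrib]
    calc |∑ b : ∀ i, Fin (d i), ((if (∀ i, i ∉ s1 → b i = a i) then fbar b * k b else 0)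
          - (if (∀ i, i ∉ s1 → b i = a i) then ZD b * h b else 0))|
        ≤ ∑ b : ∀ i, Fin (d i), |(if (∀ i, i ∉ s1 → b i = a i) then fbar b * k b else 0)
          - (if (∀ i, i ∉ s1 → b i = a i) then ZD b * h b else 0)| :=
          Finset.abs_sum_le_sum_abs _ _
      _ ≤ ∑ b : ∀ i, Fin (d i), |fbar b| * (ε1 * T) := by
          refine Finset.sum_le_sum fun b _ => ?_
          by_cases hcond : (∀ i, i ∉ s1 → b i = a i)
          · rw [if_pos hcond, if_pos hcond, hZD b]
            have heq : fbar b * k b - fbar b * f' (A b) * h b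
                = fbar b * (k b - f' (A b) * h b) := by ring
            rw [heq, abs_mul]
            refine mul_le_mul_of_nonneg_left ?_ (abs_nonneg _)
            have h7 : |k b - f' (A b) * h b| ≤ ε1 * |h b| := by
              simpa [hkdef] using H1 b (h b) (hhb1 b)
            exact h7.trans (mul_le_mul_of_nonneg_left (hhT b) hε1.le)
          · rw [if_neg hcond, if_neg hcond]
            simp only [sub_zero, abs_zero]
            positivity
      _ = S * (ε1 * T) := by rw [hSdef, ← Finset.sum_mul]
  have hterm2 : tnorm d s2 (tmul d (s2 ∪ s1) s1 s2 fbar k - tmul d (s2 ∪ s1) s1 s2 ZD h)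
      ≤ c * (S * (ε1 * T)) := by
    have := pb_tnorm_le d s2 _ (S * (ε1 * T)) (by positivity) hdiffb
    rwa [← hcdef] at this
  -- combine
  have hsplit : Y ((fun a => f (A a)) + k) - Y (fun a => f (A a))
      - tmul d (s2 ∪ s1) s1 s2 ZD h
      = (Y ((fun a => f (A a)) + k) - Y (fun a => f (A a))
        - tmul d (s2 ∪ s1) s1 s2 fbar k)
        + (tmul d (s2 ∪ s1) s1 s2 fbar k - tmul d (s2 ∪ s1) s1 s2 ZD h) := by
    abel
  have hmain : tnorm d s2 (Y ((fun a => f (A a)) + k) - Y (fun a => f (A a))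
      - tmul d (s2 ∪ s1) s1 s2 ZD h) ≤ ε2 * (c * (C1 * T)) + c * (S * (ε1 * T)) := by
    rw [hsplit]
    exact le_trans (pb_tnorm_triangle d s2 _ _) (add_le_add hterm1 hterm2)
  have hnum0 : 0 ≤ tnorm d s2 (Y ((fun a => f (A a)) + k) - Y (fun a => f (A a))
      - tmul d (s2 ∪ s1) s1 s2 ZD h) := pb_tnorm_nonneg d s2 _
  have h8 : tnorm d s2 (Y ((fun a => f (A a)) + k) - Y (fun a => f (A a))
      - tmul d (s2 ∪ s1) s1 s2 ZD h) / T ≤ ε2 * (c * C1) + ε1 * (c * S) := by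
    rw [div_le_iff₀ hT]
    have hre : ε2 * (c * (C1 * T)) + c * (S * (ε1 * T))
        = (ε2 * (c * C1) + ε1 * (c * S)) * T := by ring
    linarith
  have h9 : ε2 * (c * C1) + ε1 * (c * S) < ε := by
    have e1 : ε2 * (c * C1) < ε / 2 := by
      have q1 : ε2 * (c * C1) < ε2 * (c * C1 + 1) := by nlinarith
      have q2 : ε2 * (c * C1 + 1) = ε / 2 := by
        rw [hε2def]; field_simp
      linarith
    have e2 : ε1 * (c * S) < ε / 2 := by
      have q1 : ε1 * (c * S) < ε1 * (c * S + 1) := by nlinarith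
      have q2 : ε1 * (c * S + 1) = ε / 2 := by
        rw [hε1def]; field_simp
      linarith
    linarith
  show dist _ 0 < ε
  rw [dist_zero_right, Real.norm_eq_abs]
  rw [hfc]
  rw [abs_of_nonneg (div_nonneg hnum0 hT.le)]
  exact lt_of_le_of_lt h8 h9
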